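/- The fixed-point locus of every nontrivial element of O_F^× ⋉ O_F acting on ℂ^{s+t} is contained in ℝ^s × ℂ^t: if (u, a) ∈ O_F^× × O_F with (u, a) ≠ (1, 0) and z ∈ ℂ^{s+t} satisfies σ_i(u)z_i + σ_i(a) = z_i for every i = 1, …, s+t, then u ≠ 1 and the coordinates z_1, …, z_s are real numbers. -/

import Mathlib

/-! At a real place the affine map `w ↦ σ(u) w + σ(a)` has real coefficients, and `σ(u) ≠ 1`
because `σ` is injective, so its unique fixed point `σ(a) / (1 - σ(u))` is real. -/

open scoped NumberField

theorem Complex.im_eq_zero_of_mul_add_eq_self {c b z : ℂ} (hc : c.im = 0) (hb : b.im = 0)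
    (hc1 : c ≠ 1) (h : c * z + b = z) : z.im = 0 := by
  have him := congrArg Complex.im h
  simp only [Complex.add_im, Complex.mul_im, hc, hb, zero_mul, add_zero] at him
  have hre : c.re - 1 ≠ 0 := sub_ne_zero.mpr fun h1 => hc1 (Complex.ext h1 hc)
  exact (mul_eq_zero.mp (by linear_combination him : (c.re - 1) * z.im = 0)).resolve_left hre

theorem NumberField.RingOfIntegers.injective_comp_algebraMap {F K : Type*} [Field F]
    [DivisionRing K] (σ : F →+* K) :
    Function.Injective (σ.comp (algebraMap (𝓞 F) F)) :=
  σ.injective.comp NumberField.RingOfIntegers.coe_injective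

theorem ot_fixed_points_real_general
    (F : Type) [Field F] [NumberField F] (s t : ℕ)
    (hs : 0 < s)
    (σ : Fin (s + t) → (F →+* ℂ))
    (hreal : ∀ i : Fin (s + t), (i : ℕ) < s → ∀ x : F, (σ i x).im = 0)
    (u : (𝓞 F)ˣ) (a : 𝓞 F) (hua : (u, a) ≠ ((1 : (𝓞 F)ˣ), (0 : 𝓞 F)))
    (z : Fin (s + t) → ℂ)
    (hz : ∀ i : Fin (s + t),
      σ i (algebraMap (𝓞 F) F (u : 𝓞 F)) * z i + σ i (algebraMap (𝓞 F) F a) = z i) :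
    u ≠ 1 ∧ ∀ i : Fin (s + t), (i : ℕ) < s → (z i).im = 0 := by
  have hinj := fun i => NumberField.RingOfIntegers.injective_comp_algebraMap (σ i)
  have hu : u ≠ 1 := by
    rintro rfl
    refine hua (Prod.ext rfl (hinj ⟨0, Nat.lt_add_right t hs⟩ ?_))
    simpa using hz ⟨0, Nat.lt_add_right t hs⟩
  refine ⟨hu, fun i hi =>
    Complex.im_eq_zero_of_mul_add_eq_self (hreal i hi _) (hreal i hi _) ?_ (hz i)⟩
  exact fun h1 => hu (Units.ext (hinj i (by simpa using h1)))

/-- The fixed-point locus of every nontrivial element of `O_F^× ⋉ O_F` acting on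
`ℂ^(s+t)` is contained in `ℝ^s × ℂ^t`: if `(u, a) ≠ (1, 0)` and `z` satisfies
`σ i (u) * z i + σ i (a) = z i` for every `i`, then `u ≠ 1` and `z 1, …, z s` are real. -/
theorem ot_fixed_points_real
    (F : Type) [Field F] [NumberField F] (s t : ℕ)
    (hs : 0 < s) (ht : 0 < t)
    (hdeg : Module.finrank ℚ F = s + 2 * t)
    (σ : Fin (s + t) → (F →+* ℂ))
    (hreal : ∀ i : Fin (s + t), (i : ℕ) < s → ∀ x : F, (σ i x).im = 0)
    (hcplx : ∀ i : Fin (s + t), s ≤ (i : ℕ) → ∃ x : F, (σ i x).im ≠ 0)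
    (hdist : Function.Injective σ)
    (hpair : ∀ i j : Fin (s + t), (starRingEnd ℂ).comp (σ i) = σ j → (i : ℕ) < s)
    (hall : ∀ ψ : F →+* ℂ, ∃ i : Fin (s + t), ψ = σ i ∨ ψ = (starRingEnd ℂ).comp (σ i))
    (u : (𝓞 F)ˣ) (a : 𝓞 F) (hua : (u, a) ≠ ((1 : (𝓞 F)ˣ), (0 : 𝓞 F)))
    (z : Fin (s + t) → ℂ)
    (hz : ∀ i : Fin (s + t),
      σ i (algebraMap (𝓞 F) F (u : 𝓞 F)) * z i + σ i (algebraMap (𝓞 F) F a) = z i) :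
    u ≠ 1 ∧ ∀ i : Fin (s + t), (i : ℕ) < s → (z i).im = 0 :=
  ot_fixed_points_real_general F s t hs σ hreal u a hua z hz
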